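/- arXiv:1204.5582 — 2 statements merged into one kernel-verified Lean document; each statement's English description precedes it below -/
import Mathlib

section
/- The application function f(- /b,c) = b'c = ⋃{d ∈ ⋃⋃b : ⟨c,d⟩ ∈ b} is in PCSF⁻, where ⟨c,d⟩ = {{c},{c,d}} is the Kuratowski ordered pair. (Thus b'c is the unique d with ⟨c,d⟩ ∈ b when such a d exists.) -/
open scoped Classical

noncomputable section

namespace PCSFPaper

/-! ## Basic ZF-set helpers -/

/-- Image `{f z : z ∈ x}` of a ZF-set under an arbitrary class function. -/
noncomputable def zImage (f : ZFSet → ZFSet) (x : ZFSet) : ZFSet :=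
  @ZFSet.image f (Classical.allZFSetDefinable fun s => f (s 0)) x

/-- Kuratowski ordered pair `⟨c,d⟩ = {{c},{c,d}}`. -/
def kpair (c d : ZFSet) : ZFSet := {{c}, {c, d}}

/-! ## Δ₀ formulas of the language of set theory -/

/-- Δ₀ (bounded) formulas in the first-order language of set theory,
with `k` free variables.  In the bounded quantifiers `ball i φ`/`bex i φ`
the newly bound variable (ranging over the elements of variable `i`)
becomes variable `0` of `φ`, the old variables being shifted up by one. -/
inductive D0 : ℕ → Type
  | mem {k : ℕ} (i j : Fin k) : D0 k
  | eq {k : ℕ} (i j : Fin k) : D0 k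
  | not {k : ℕ} : D0 k → D0 k
  | and {k : ℕ} : D0 k → D0 k → D0 k
  | or {k : ℕ} : D0 k → D0 k → D0 k
  | ball {k : ℕ} (i : Fin k) : D0 (k + 1) → D0 k
  | bex {k : ℕ} (i : Fin k) : D0 (k + 1) → D0 k

/-- Satisfaction of Δ₀ formulas in the universe of ZF-sets. -/
def D0.Sat : ∀ {k : ℕ}, D0 k → (Fin k → ZFSet) → Prop
  | _, .mem i j, v => v i ∈ v j
  | _, .eq i j, v => v i = v j
  | _, .not φ, v => ¬ φ.Sat v
  | _, .and φ ψ, v => φ.Sat v ∧ ψ.Sat v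
  | _, .or φ ψ, v => φ.Sat v ∨ ψ.Sat v
  | _, .ball i φ, v => ∀ z ∈ v i, φ.Sat (Fin.cons z v)
  | _, .bex i φ, v => ∃ z ∈ v i, φ.Sat (Fin.cons z v)

/-- A `k`-ary relation on sets is Δ₀ iff it is defined by some Δ₀ formula. -/
def IsDelta0 {k : ℕ} (R : (Fin k → ZFSet) → Prop) : Prop :=
  ∃ φ : D0 k, ∀ v, R v ↔ φ.Sat v

/-! ## The classes PCSF⁻ and PCSF -/

/-- The class `PCSF⁻` of predicatively computable set functions taking only
safe arguments: generated from projections, pairing, null, union and the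
membership conditional, by composition and safe separation. -/
inductive PCSFminus : ∀ m : ℕ, ((Fin m → ZFSet) → ZFSet) → Prop
  | proj {m : ℕ} (j : Fin m) : PCSFminus m fun a => a j
  | pair : PCSFminus 2 fun a => {a 0, a 1}
  | null : PCSFminus 0 fun _ => ∅
  | union : PCSFminus 1 fun a => ZFSet.sUnion (a 0)
  | cond : PCSFminus 4 fun a => if a 2 ∈ a 3 then a 0 else a 1
  | comp {m k : ℕ} (h : (Fin k → ZFSet) → ZFSet) (t : Fin k → (Fin m → ZFSet) → ZFSet) :
      PCSFminus k h → (∀ i, PCSFminus m (t i)) →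
      PCSFminus m fun a => h fun i => t i a
  | sep {m : ℕ} (h : (Fin (m + 1) → ZFSet) → ZFSet) :
      PCSFminus (m + 1) h →
      PCSFminus (m + 1) fun a =>
        ZFSet.sep (fun b => h (Fin.snoc (Fin.init a) b) ≠ ∅) (a (Fin.last m))

/-- The class `PCSF` of predicatively computable set functions, with `n` normal
and `m` safe arguments: generated from `PCSF⁻` (whose arguments are all safe)
and projections by safe composition and predicative set recursion.  The
recursion rule is stated via its defining equation (which determines the
function uniquely, by ∈-induction); the recursion argument `x` is the first
normal argument, and the set `{f(z,ȳ/ā) : z ∈ x}` of previous values is passed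
to `h` as a last, safe, argument. -/
inductive PCSF : ∀ n m : ℕ, ((Fin n → ZFSet) → (Fin m → ZFSet) → ZFSet) → Prop
  | ofMinus {m : ℕ} (h : (Fin m → ZFSet) → ZFSet) :
      PCSFminus m h → PCSF 0 m fun _ a => h a
  | proj {n m : ℕ} (j : Fin (n + m)) : PCSF n m fun x a => Fin.append x a j
  | comp {n m k l : ℕ} (h : (Fin k → ZFSet) → (Fin l → ZFSet) → ZFSet)
      (r : Fin k → (Fin n → ZFSet) → (Fin 0 → ZFSet) → ZFSet)
      (t : Fin l → (Fin n → ZFSet) → (Fin m → ZFSet) → ZFSet) :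
      PCSF k l h → (∀ i, PCSF n 0 (r i)) → (∀ i, PCSF n m (t i)) →
      PCSF n m fun x a => h (fun i => r i x Fin.elim0) fun i => t i x a
  | recur {n m : ℕ} (h : (Fin (n + 1) → ZFSet) → (Fin (m + 1) → ZFSet) → ZFSet)
      (f : (Fin (n + 1) → ZFSet) → (Fin m → ZFSet) → ZFSet) :
      PCSF (n + 1) (m + 1) h →
      (∀ (x : ZFSet) (y : Fin n → ZFSet) (a : Fin m → ZFSet),
        f (Fin.cons x y) a =
          h (Fin.cons x y) (Fin.snoc a (zImage (fun z => f (Fin.cons z y) a) x))) →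
      PCSF (n + 1) m f

/-- A relation is in `PCSF` iff its characteristic function
(`1 = {∅}` for true, `0 = ∅` for false) is in `PCSF`. -/
def PCSFRel (n m : ℕ) (R : (Fin n → ZFSet) → (Fin m → ZFSet) → Prop) : Prop :=
  PCSF n m fun x a => if R x a then ({∅} : ZFSet) else ∅

/-! ## Transitive closure, hereditary finiteness -/

/-- Transitive closure `TC(x) = x ∪ ⋃{TC(y) : y ∈ x}` by ∈-recursion. -/
noncomputable def TCset : ZFSet → ZFSet :=
  ZFSet.mem_wf.fix fun x ih =>
    x ∪ ZFSet.sUnion (zImage (fun y => if h : y ∈ x then ih y h else ∅) x)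

/-- A set is hereditarily finite iff its transitive closure is finite. -/
def IsHF (x : ZFSet) : Prop := (TCset x).toSet.Finite

/-- `cT x` = cardinality of the transitive closure of `x`
(junk value `0` if infinite). -/
noncomputable def cT (x : ZFSet) : ℕ := (TCset x).toSet.ncard

/-- The finite union `A₁ ∪ ⋯ ∪ Aₘ`. -/
def unionFin {m : ℕ} (A : Fin m → ZFSet) : ZFSet :=
  (List.ofFn A).foldr (· ∪ ·) ∅

/-! ## The encoding ν of binary strings, application, product -/

/-- The von Neumann numeral 1 = {∅}. -/
def zOne : ZFSet := {∅}

/-- The von Neumann numeral 2 = {∅,{∅}}. -/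
def zTwo : ZFSet := {∅, {∅}}

/-- The encoding of binary strings (head of the list = last appended bit):
`ν(ε) = ∅` and `ν(s i) = ⟨i+1, ν s⟩`, a bit `i ∈ {0,1}` being represented
by the boolean `i = 1`. -/
def nu : List Bool → ZFSet
  | [] => ∅
  | b :: s => kpair (if b then zTwo else zOne) (nu s)

/-- `zApp b c = b'c = ⋃{d ∈ ⋃⋃b : ⟨c,d⟩ ∈ b}` (which is `⋃{d : ⟨c,d⟩ ∈ b}`,
since every such `d` belongs to `⋃⋃b`). -/
def zApp (b c : ZFSet) : ZFSet :=
  ZFSet.sUnion (ZFSet.sep (fun d => kpair c d ∈ b) (ZFSet.sUnion (ZFSet.sUnion b)))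

/-- Cartesian product `a × b = {⟨u,v⟩ : u ∈ a, v ∈ b}` (with Kuratowski pairs). -/
noncomputable def zProd (a b : ZFSet) : ZFSet :=
  ZFSet.sUnion (zImage (fun u => zImage (fun v => kpair u v) b) a)

/-! ## Polynomial time computability on binary strings -/

/-- The trivial encoding of binary strings over the alphabet `Bool`. -/
def boolListEncoding : Computability.Encoding (List Bool) Bool where
  encode := id
  decode := fun l => some l
  decode_encode := fun _ => rfl

/-- Encoding of a tuple of binary strings over the alphabet `Option Bool`:
the strings are listed in order, each terminated by the separator `none`. -/
def encTuple : (k : ℕ) → (Fin k → List Bool) → List (Option Bool)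
  | 0, _ => []
  | k + 1, v => (v 0).map some ++ none :: encTuple k (Fin.tail v)

/-- Splits off the first separator-terminated block. -/
def splitFirst : List (Option Bool) → List Bool × List (Option Bool)
  | [] => ([], [])
  | none :: l => ([], l)
  | some b :: l => ((splitFirst l).1.cons b, (splitFirst l).2)

theorem splitFirst_encode (s : List Bool) (rest : List (Option Bool)) :
    splitFirst (s.map some ++ none :: rest) = (s, rest) := by
  induction s with
  | nil => rfl
  | cons b s ih => simp [splitFirst, ih]

/-- Decoding of tuples of binary strings. -/
def decTuple : (k : ℕ) → List (Option Bool) → Option (Fin k → List Bool)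
  | 0, _ => some Fin.elim0
  | k + 1, l =>
    (decTuple k (splitFirst l).2).map fun v => Fin.cons (splitFirst l).1 v

theorem decTuple_encTuple : ∀ (k : ℕ) (v : Fin k → List Bool),
    decTuple k (encTuple k v) = some v := by
  intro k
  induction k with
  | zero =>
    intro v
    simp only [decTuple]
    congr
    exact funext fun i => i.elim0
  | succ k ih =>
    intro v
    simp [decTuple, encTuple, splitFirst_encode, ih (Fin.tail v), Fin.cons_self_tail]

/-- The standard encoding of tuples of binary strings. -/
def tupleEncoding (k : ℕ) : Computability.Encoding (Fin k → List Bool) (Option Bool) where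
  encode := encTuple k
  decode := decTuple k
  decode_encode := decTuple_encTuple k

/-- A function on tuples of binary strings is polynomial time computable iff
some two-stack machine computes it in polynomial time (Mathlib's notion). -/
def PolyTimeStringFun {k : ℕ} (f : (Fin k → List Bool) → List Bool) : Prop :=
  Nonempty (Turing.TM2ComputableInPolyTime (tupleEncoding k).encode boolListEncoding.encode f)

/-- Polynomial time computability for functions on ℕ,
with respect to the standard binary encoding of naturals. -/
def PolyTimeNatFun (f : ℕ → ℕ) : Prop :=
  Nonempty (Turing.TM2ComputableInPolyTime Computability.encodingNatBool.encode
    Computability.encodingNatBool.encode f)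

/-! ## A feasible encoding of lists of naturals by naturals -/

/-- Reads a list of bits (least significant first) as a natural number. -/
def bitsToNat (l : List Bool) : ℕ := l.foldr (fun b n => Nat.bit b n) 0

/-- A standard feasible (linear size) encoding of lists of natural numbers:
every bit of the binary expansion of an entry is escaped as `[false, b]`,
entries are terminated by `[true, true]`, and a final `true` protects
leading zeros. -/
def encodeNatList (l : List ℕ) : ℕ :=
  bitsToNat
    ((l.map fun n => (Nat.bits n).foldr (fun b acc => false :: b :: acc) [true, true]).foldr
        (· ++ ·) [true])

/-! ## Rooted DAGs encoding hereditarily finite sets -/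

/-- A rooted DAG: a finite set `V` of natural numbers, edges `E ⊆ V × V`
going strictly downwards, and a root `r ∈ V` which is the only node of
indegree zero. -/
structure RootedDag where
  V : Finset ℕ
  E : Finset (ℕ × ℕ)
  r : ℕ
  edge_mem : ∀ e ∈ E, e.1 ∈ V ∧ e.2 ∈ V
  root_mem : r ∈ V
  root_indeg : ∀ e ∈ E, e.2 ≠ r
  reach_nonroot : ∀ a ∈ V, a ≠ r → ∃ b ∈ V, (b, a) ∈ E
  desc : ∀ e ∈ E, e.2 < e.1

namespace RootedDag

/-- The children of a node. -/
def children (G : RootedDag) (a : ℕ) : Finset ℕ :=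
  (G.E.filter fun e => e.1 = a).image Prod.snd

theorem children_lt (G : RootedDag) {a b : ℕ} (h : b ∈ G.children a) : b < a := by
  simp only [children, Finset.mem_image, Finset.mem_filter] at h
  obtain ⟨e, ⟨heE, he1⟩, he2⟩ := h
  have := G.desc e heE
  omega

/-- The hereditarily finite set encoded at a node:
`set_G(a) = {set_G(b) : (a,b) ∈ E}`. -/
def setAt (G : RootedDag) (a : ℕ) : ZFSet.{0} :=
  (((G.children a).attach.toList).map fun b => G.setAt b.1).foldr insert ∅
termination_by a
decreasing_by exact G.children_lt b.2

/-- The hereditarily finite set encoded by a rooted DAG. -/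
def set (G : RootedDag) : ZFSet.{0} := G.setAt G.r

/-- A DAG is fully collapsed iff distinct nodes encode distinct sets. -/
def FullyCollapsed (G : RootedDag) : Prop :=
  ∀ a ∈ G.V, ∀ b ∈ G.V, G.setAt a = G.setAt b → a = b

/-- Reachability along edges. -/
def Reaches (G : RootedDag) (a b : ℕ) : Prop :=
  Relation.ReflTransGen (fun u v => (u, v) ∈ G.E) a b

/-- The node set of the sub-DAG `G|a` of nodes reachable from `a`. -/
noncomputable def reachSet (G : RootedDag) (a : ℕ) : Finset ℕ :=
  G.V.filter fun b => G.Reaches a b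

/-- A DAG is balanced iff each node `a` is at most the number of nodes of `G|a`. -/
def Balanced (G : RootedDag) : Prop :=
  ∀ a ∈ G.V, a ≤ (G.reachSet a).card

end RootedDag

/-- The numeric code `⌈G⌉` of a rooted DAG: the code of the triple consisting
of (the code of) the sorted list of vertices, (the code of) the sorted list of
pair-coded edges, and the root. -/
noncomputable def RootedDag.code (G : RootedDag) : ℕ :=
  encodeNatList [encodeNatList (G.V.sort (· ≤ ·)),
    encodeNatList ((G.E.image fun e => Nat.pair e.1 e.2).sort (· ≤ ·)), G.r]

/-- The finite set `{l₀, …, l_{n-1}}` as a ZF-set. -/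
def zSetOfList (l : List ZFSet) : ZFSet := l.foldr insert ∅

/-!
The application function is `⋃` of a separation of `⋃⋃b`, so it suffices that `PCSF⁻` is closed
under separation `{d ∈ s(ā) : u(ā,d) ∈ v(ā,d)}` for `PCSF⁻` functions `s`, `u`, `v`. The
separation rule only separates from the last argument, by a condition `h ≠ ∅`; composing it with
the tuple `(ā, s(ā))` allows an arbitrary set `s(ā)`, and the conditional turns `u ∈ v` into the
condition `(if u ∈ v then {∅} else ∅) ≠ ∅`.
-/

namespace PCSFminus

variable {m : ℕ}

theorem of_eq {f g : (Fin m → ZFSet) → ZFSet} (hf : PCSFminus m f) (h : ∀ a, f a = g a) :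
    PCSFminus m g :=
  funext h ▸ hf

theorem const_empty : PCSFminus m fun _ => ∅ :=
  comp _ Fin.elim0 null fun i => i.elim0

theorem pair_comp {s t : (Fin m → ZFSet) → ZFSet} (hs : PCSFminus m s) (ht : PCSFminus m t) :
    PCSFminus m fun a => {s a, t a} :=
  comp _ ![s, t] pair (Fin.forall_fin_two.2 ⟨hs, ht⟩)

theorem sUnion_comp {s : (Fin m → ZFSet) → ZFSet} (hs : PCSFminus m s) :
    PCSFminus m fun a => ZFSet.sUnion (s a) :=
  comp _ ![s] union (Fin.forall_fin_one.2 hs)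

theorem cond_comp {s t c d : (Fin m → ZFSet) → ZFSet} (hs : PCSFminus m s) (ht : PCSFminus m t)
    (hc : PCSFminus m c) (hd : PCSFminus m d) :
    PCSFminus m fun a => if c a ∈ d a then s a else t a :=
  comp _ ![s, t, c, d] cond (by simp [Fin.forall_fin_succ, *])

theorem singleton_comp {s : (Fin m → ZFSet) → ZFSet} (hs : PCSFminus m s) :
    PCSFminus m fun a => {s a} :=
  (pair_comp hs hs).of_eq fun a => ZFSet.pair_eq_singleton (s a)

theorem kpair_comp {c d : (Fin m → ZFSet) → ZFSet} (hc : PCSFminus m c) (hd : PCSFminus m d) :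
    PCSFminus m fun a => kpair (c a) (d a) :=
  pair_comp (singleton_comp hc) (pair_comp hc hd)

theorem snoc_comp {s : (Fin m → ZFSet) → ZFSet} (hs : PCSFminus m s) (i : Fin (m + 1)) :
    PCSFminus m fun a => Fin.snoc (α := fun _ => ZFSet) a (s a) i := by
  induction i using Fin.lastCases with
  | last => simpa only [Fin.snoc_last] using hs
  | cast j => simpa only [Fin.snoc_castSucc] using proj j

theorem sep_comp {h : (Fin (m + 1) → ZFSet) → ZFSet} {s : (Fin m → ZFSet) → ZFSet}
    (hh : PCSFminus (m + 1) h) (hs : PCSFminus m s) :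
    PCSFminus m fun a => ZFSet.sep (fun b => h (Fin.snoc a b) ≠ ∅) (s a) :=
  (comp _ _ (sep h hh) (snoc_comp hs)).of_eq fun a => by
    simp only [Fin.init_snoc, Fin.snoc_last]

theorem sep_mem_comp {u v : (Fin (m + 1) → ZFSet) → ZFSet} {s : (Fin m → ZFSet) → ZFSet}
    (hu : PCSFminus (m + 1) u) (hv : PCSFminus (m + 1) v) (hs : PCSFminus m s) :
    PCSFminus m fun a => ZFSet.sep (fun b => u (Fin.snoc a b) ∈ v (Fin.snoc a b)) (s a) := by
  refine (sep_comp (cond_comp (singleton_comp const_empty) const_empty hu hv) hs).of_eq fun a => ?_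
  congr 1
  funext b
  by_cases hb : u (Fin.snoc a b) ∈ v (Fin.snoc a b)
  · simpa only [hb, if_true, eq_iff_iff, iff_true] using
      fun he : ({∅} : ZFSet) = ∅ => ZFSet.not_nonempty_empty (he ▸ ZFSet.singleton_nonempty ∅)
  · simp [hb]

end PCSFminus

/-- The application function
`f(−/b,c) = b'c = ⋃{d ∈ ⋃⋃b : ⟨c,d⟩ ∈ b}` is in `PCSF⁻`. -/
theorem app_mem_PCSFminus : PCSFminus 2 fun a => zApp (a 0) (a 1) :=
  open PCSFminus in
  sUnion_comp <|
    sep_mem_comp (kpair_comp (proj 1) (proj 2)) (proj 0) (sUnion_comp (sUnion_comp (proj 0)))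

end PCSFPaper
end
end

section
/- The transitive closure function TC(x/ -) = x ∪ ⋃{TC(y/ -) : y∈x} and the set-theoretic rank function rank(x/ -) = ⋃{rank(y/ -)+1 : y∈x} (where a+1 = a∪{a}) are both in PCSF, taking their argument as a normal argument. -/
open scoped Classical

noncomputable section

namespace PCSFPaper

/- Every step function the recursions need is a union of safe arguments, and of unions of them,
so it already lies in `PCSF⁻`. The set-recursion rule of `PCSF` therefore computes `TC` with step
`(x, S) ↦ x ∪ ⋃S` and `rank` with step `(x, S) ↦ ⋃S ∪ S`, using
`⋃{r ∪ {r} : r ∈ S} = ⋃S ∪ S`. -/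

theorem mem_zImage {f : ZFSet → ZFSet} {x z : ZFSet} :
    z ∈ zImage f x ↔ ∃ y ∈ x, f y = z := by
  let := Classical.allZFSetDefinable fun s : Fin 1 → ZFSet => f (s 0)
  exact ZFSet.mem_image

theorem zImage_congr {f g : ZFSet → ZFSet} {x : ZFSet} (h : ∀ y ∈ x, f y = g y) :
    zImage f x = zImage g x :=
  ZFSet.ext fun z => by
    simp only [mem_zImage]
    exact exists_congr fun y => and_congr_right fun hy => by rw [h y hy]

theorem sUnion_zImage_succ (f : ZFSet → ZFSet) (x : ZFSet) :
    ZFSet.sUnion (zImage (fun y => f y ∪ {f y}) x) =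
      ZFSet.sUnion (zImage f x) ∪ zImage f x := by
  ext z
  simp only [ZFSet.mem_sUnion, mem_zImage, ZFSet.mem_union, ZFSet.mem_singleton,
    exists_exists_and_eq_and, and_or_left, exists_or, eq_comm (a := z)]

theorem exists_eq_zImage_rec (H : ZFSet → ZFSet → ZFSet) :
    ∃ F : ZFSet → ZFSet, ∀ x, F x = H x (zImage F x) := by
  refine ⟨ZFSet.mem_wf.fix fun x ih =>
    H x (zImage (fun y => if hy : y ∈ x then ih y hy else ∅) x), fun x => ?_⟩
  rw [WellFounded.fix_eq]
  exact congrArg (H x) (zImage_congr fun y hy => dif_pos hy)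

theorem PCSFminus.binaryUnion : PCSFminus 2 fun a => a 0 ∪ a 1 := by
  simpa only [ZFSet.sUnion_pair] using
    PCSFminus.comp (m := 2) _ (fun _ a => {a 0, a 1}) PCSFminus.union fun _ => PCSFminus.pair

namespace PCSF

variable {n m : ℕ}

theorem proj_normal (i : Fin n) : PCSF n m fun x _ => x i := by
  simpa only [Fin.append_left] using PCSF.proj (n := n) (m := m) (Fin.castAdd m i)

theorem proj_safe (j : Fin m) : PCSF n m fun _ a => a j := by
  simpa only [Fin.append_right] using PCSF.proj (n := n) (m := m) (Fin.natAdd n j)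

theorem comp_minus {l : ℕ} {h : (Fin l → ZFSet) → ZFSet}
    {t : Fin l → (Fin n → ZFSet) → (Fin m → ZFSet) → ZFSet}
    (hh : PCSFminus l h) (ht : ∀ i, PCSF n m (t i)) :
    PCSF n m fun x a => h fun i => t i x a :=
  PCSF.comp (fun _ a => h a) Fin.elim0 t (PCSF.ofMinus h hh) (fun i => i.elim0) ht

theorem sUnion {f : (Fin n → ZFSet) → (Fin m → ZFSet) → ZFSet} (hf : PCSF n m f) :
    PCSF n m fun x a => ZFSet.sUnion (f x a) :=
  comp_minus (t := fun _ => f) PCSFminus.union fun _ => hf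

theorem union {f g : (Fin n → ZFSet) → (Fin m → ZFSet) → ZFSet}
    (hf : PCSF n m f) (hg : PCSF n m g) :
    PCSF n m fun x a => f x a ∪ g x a :=
  comp_minus (t := ![f, g]) PCSFminus.binaryUnion fun i => by
    fin_cases i
    exacts [hf, hg]

theorem of_zImage_rec {F : ZFSet → ZFSet} {H : ZFSet → ZFSet → ZFSet}
    (hF : ∀ x, F x = H x (zImage F x)) (hH : PCSF 1 1 fun x a => H (x 0) (a 0)) :
    PCSF 1 0 fun x _ => F (x 0) :=
  PCSF.recur _ _ hH fun x _ _ => hF x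

end PCSF

/-- The transitive closure `TC(x/−) = x ∪ ⋃{TC(y) : y ∈ x}`
and the rank `rank(x/−) = ⋃{rank(y)+1 : y ∈ x}` (with `a + 1 = a ∪ {a}`) are
in `PCSF`, their argument being normal. -/
theorem tc_rank_PCSF :
    (∃ TC : ZFSet → ZFSet,
      (∀ x, TC x = x ∪ ZFSet.sUnion (zImage TC x)) ∧
      PCSF 1 0 fun x _ => TC (x 0)) ∧
    (∃ rk : ZFSet → ZFSet,
      (∀ x, rk x = ZFSet.sUnion (zImage (fun y => rk y ∪ {rk y}) x)) ∧
      PCSF 1 0 fun x _ => rk (x 0)) := by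
  obtain ⟨TC, hTC⟩ := exists_eq_zImage_rec fun x S => x ∪ ZFSet.sUnion S
  obtain ⟨rk, hrk⟩ := exists_eq_zImage_rec fun _ S => ZFSet.sUnion S ∪ S
  refine ⟨⟨TC, hTC, ?_⟩, ⟨rk, fun x => (hrk x).trans (sUnion_zImage_succ rk x).symm, ?_⟩⟩
  · exact PCSF.of_zImage_rec (H := fun x S => x ∪ ZFSet.sUnion S) hTC
      ((PCSF.proj_normal 0).union (PCSF.proj_safe 0).sUnion)
  · exact PCSF.of_zImage_rec (H := fun _ S => ZFSet.sUnion S ∪ S) hrk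
      ((PCSF.proj_safe 0).sUnion.union (PCSF.proj_safe 0))

end PCSFPaper
end
end
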